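/- The real 4×4 matrix M with rows ( 0, 1/√2, −(1/4)·√((7−√17)/2), (−1−√17)/8 ), ( −1/√2, 0, (−1−√17)/8, (1/4)·√((7−√17)/2) ), ( (1/4)·√((7−√17)/2), (1+√17)/8, 0, 1/√2 ), ( (1+√17)/8, −(1/4)·√((7−√17)/2), −1/√2, 0 ) is orthogonal, i.e. Mᵀ·M is the identity matrix. (This is the block of the vertical gauge transformation between the connections ραk and αραk for AH+1 with columns d·b·b̃·F, d·e·ẽ·F, d·ẽ·e·F, d·g̃·g·F, from Appendix A of the paper.) -/
import Mathlib


open Matrix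

lemma aux_orth (a b c : ℝ) (h : a ^ 2 + b ^ 2 + c ^ 2 = 1) :
    (!![0, a, -b, -c; -a, 0, -c, b; b, c, 0, a; c, -b, -a, 0] :
      Matrix (Fin 4) (Fin 4) ℝ)ᵀ *
      !![0, a, -b, -c; -a, 0, -c, b; b, c, 0, a; c, -b, -a, 0] = 1 := by
  rw [show (!![0, a, -b, -c; -a, 0, -c, b; b, c, 0, a; c, -b, -a, 0] :
      Matrix (Fin 4) (Fin 4) ℝ)ᵀ = !![0, -a, b, c; a, 0, c, -b; -b, -c, 0, -a; -c, b, a, 0] by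
    ext i j; fin_cases i <;> fin_cases j <;> simp]
  ext i j
  fin_cases i <;> fin_cases j <;>
    simp [Matrix.mul_apply, Fin.sum_univ_four, Matrix.one_apply] <;> linarith [h]

/-- The block of the vertical gauge transformation between ραk and αραk for AH+1 with columns
d·b·b̃·F, d·e·ẽ·F, d·ẽ·e·F, d·g̃·g·F. -/
noncomputable def M : Matrix (Fin 4) (Fin 4) ℝ :=
  !![0, 1 / Real.sqrt 2, -(1 / 4) * Real.sqrt ((7 - Real.sqrt 17) / 2),
       (-1 - Real.sqrt 17) / 8;
     -1 / Real.sqrt 2, 0, (-1 - Real.sqrt 17) / 8,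
       (1 / 4) * Real.sqrt ((7 - Real.sqrt 17) / 2);
     (1 / 4) * Real.sqrt ((7 - Real.sqrt 17) / 2), (1 + Real.sqrt 17) / 8, 0,
       1 / Real.sqrt 2;
     (1 + Real.sqrt 17) / 8, -(1 / 4) * Real.sqrt ((7 - Real.sqrt 17) / 2),
       -1 / Real.sqrt 2, 0]

/-- This block of the vertical gauge transformation is orthogonal. -/
theorem stmt_18 : Mᵀ * M = (1 : Matrix (Fin 4) (Fin 4) ℝ) := by
  have hs : Real.sqrt 17 ^ 2 = 17 := Real.sq_sqrt (by norm_num)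
  have hs7 : Real.sqrt 17 ≤ 7 := by nlinarith [Real.sqrt_nonneg 17]
  have hq : Real.sqrt ((7 - Real.sqrt 17) / 2) ^ 2 = (7 - Real.sqrt 17) / 2 :=
    Real.sq_sqrt (by linarith)
  have h2 : Real.sqrt 2 ^ 2 = 2 := Real.sq_sqrt (by norm_num)
  have h2n : Real.sqrt 2 ≠ 0 := by positivity
  have hM : M = !![0, 1 / Real.sqrt 2, -(1 / 4 * Real.sqrt ((7 - Real.sqrt 17) / 2)),
      -((1 + Real.sqrt 17) / 8);
      -(1 / Real.sqrt 2), 0, -((1 + Real.sqrt 17) / 8),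
      1 / 4 * Real.sqrt ((7 - Real.sqrt 17) / 2);
      1 / 4 * Real.sqrt ((7 - Real.sqrt 17) / 2), (1 + Real.sqrt 17) / 8, 0,
      1 / Real.sqrt 2;
      (1 + Real.sqrt 17) / 8, -(1 / 4 * Real.sqrt ((7 - Real.sqrt 17) / 2)),
      -(1 / Real.sqrt 2), 0] := by
    unfold M
    congr 1 <;> ring
  rw [hM]
  apply aux_orth
  have h1 : (1 / Real.sqrt 2) ^ 2 = 1 / 2 := by
    rw [div_pow, h2]; norm_num
  rw [h1]
  nlinarith [hq, hs]
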